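/- arXiv:2504.19732 — 3 statements merged into one kernel-verified Lean document; each statement's English description precedes it below -/
import Mathlib

section
/- Let $s<2$ and $A\in\mathbb{R}$, and let $f:(0,\infty)\to[0,\infty)$ be a measurable decreasing function such that $I:=\int_0^\infty \sigma^{-s/2+A-1} f(\sqrt{\sigma})\,d\sigma<\infty$. Then for every $\omega>0$ there exists a constant $C>0$ (depending on $s$, $A$, $\omega$ and $I$) such that for every $r>0$ one has $\int_0^\infty t^{-s/2}(\omega+t)^{A-1} f(\sqrt{\omega+t}\; r)\,dt \le C\, r^{s-2A}$. -/
open MeasureTheory Real Set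
open scoped ENNReal

/-!
Put `G σ = f (√σ * r)` and `β = A - s/2`. The substitution `σ ↦ r² σ` turns `I` into
`r ^ (2β) * ∫ σ^(β-1) G(σ) dσ`, so it suffices to bound the left-hand side by a constant
`K(s, A, ω)` times the weighted integral `J(G) = ∫ σ^(β-1) G(σ) dσ`, uniformly in nonnegative
decreasing `G`. For `t > ω` we have `t^(-s/2) ≤ 2^|s/2| (ω+t)^(-s/2)`, and the translate
`σ = ω + t` is part of `J(G)`. For `t ≤ ω`, `G(ω+t) ≤ G(ω)`, the weight `t^(-s/2)` is integrable
near `0` because `s < 2`, and monotonicity gives `G(ω) ∫_{ω/2}^{ω} σ^(β-1) dσ ≤ J(G)`.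
-/

lemma Real.rpow_le_two_rpow_abs_mul_rpow {u x : ℝ} (γ : ℝ) (hu : 0 < u) (hux : u ≤ x)
    (hxu : x ≤ 2 * u) : u ^ γ ≤ 2 ^ |γ| * x ^ γ := by
  rcases le_total 0 γ with hγ | hγ
  · calc u ^ γ ≤ x ^ γ := rpow_le_rpow hu.le hux hγ
      _ ≤ 2 ^ |γ| * x ^ γ :=
        le_mul_of_one_le_left (rpow_nonneg (hu.le.trans hux) γ)
          (one_le_rpow one_le_two (abs_nonneg γ))
  · calc u ^ γ = 2 ^ |γ| * (2 * u) ^ γ := by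
          rw [abs_of_nonpos hγ, mul_rpow zero_le_two hu.le, ← mul_assoc, ← rpow_add two_pos,
            neg_add_cancel, rpow_zero, one_mul]
      _ ≤ 2 ^ |γ| * x ^ γ :=
          mul_le_mul_of_nonneg_left (rpow_le_rpow_of_nonpos (hu.trans_le hux) hxu hγ)
            (by positivity)

lemma ofReal_mul_setLIntegral_Ioi_comp_mul_left (g : ℝ → ℝ≥0∞) {c : ℝ} (hc : 0 < c) :
    ENNReal.ofReal c * ∫⁻ σ in Ioi 0, g (c * σ) = ∫⁻ σ in Ioi 0, g σ := by
  have h := lintegral_image_eq_lintegral_abs_deriv_mul (s := Ioi 0) (f := (c * ·))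
    measurableSet_Ioi (fun σ _ => ((hasDerivAt_id σ).const_mul c).hasDerivWithinAt)
    (mul_right_injective₀ hc.ne').injOn g
  simp only [image_mul_left_Ioi hc, mul_zero, mul_one, abs_of_pos hc] at h
  rw [h, lintegral_const_mul' _ _ ENNReal.ofReal_ne_top]

lemma setLIntegral_Ioi_comp_add_left (g : ℝ → ℝ≥0∞) (a : ℝ) :
    ∫⁻ t in Ioi 0, g (a + t) = ∫⁻ σ in Ioi a, g σ := by
  have h := lintegral_image_eq_lintegral_abs_deriv_mul (s := Ioi 0) (f := (a + ·))
    measurableSet_Ioi (fun t _ => ((hasDerivAt_id t).const_add a).hasDerivWithinAt)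
    (add_right_injective a).injOn g
  simpa only [image_const_add_Ioi, add_zero, abs_one, ENNReal.ofReal_one, one_mul] using h.symm

lemma setLIntegral_rpow_mul_comp_mul_left (F : ℝ → ℝ) (β : ℝ) {c : ℝ} (hc : 0 < c) :
    ∫⁻ σ in Ioi 0, ENNReal.ofReal (σ ^ (β - 1) * F (c * σ)) =
      ENNReal.ofReal (c ^ (-β)) * ∫⁻ σ in Ioi 0, ENNReal.ofReal (σ ^ (β - 1) * F σ) := by
  rw [← ofReal_mul_setLIntegral_Ioi_comp_mul_left (fun σ => ENNReal.ofReal (σ ^ (β - 1) * F σ)) hc,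
    ← mul_assoc, ← ENNReal.ofReal_mul (rpow_nonneg hc.le _),
    ← lintegral_const_mul' _ _ ENNReal.ofReal_ne_top]
  refine setLIntegral_congr_fun measurableSet_Ioi fun σ hσ => ?_
  have hscale : c ^ (-β) * c * (c * σ) ^ (β - 1) = σ ^ (β - 1) := by
    have hc1 : c ^ (-β) * c * c ^ (β - 1) = 1 := by
      rw [mul_assoc, mul_comm c, ← rpow_add_one hc.ne', ← rpow_add hc]
      simp
    rw [mul_rpow hc.le (le_of_lt hσ)]
    linear_combination σ ^ (β - 1) * hc1
  rw [← ENNReal.ofReal_mul (mul_nonneg (rpow_nonneg hc.le _) hc.le), ← mul_assoc, hscale]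

lemma setLIntegral_Ioc_mul_le_setLIntegral_mul_of_antitoneOn {w G : ℝ → ℝ}
    (hG : AntitoneOn G (Ioi 0)) (hw : ∀ σ, 0 < σ → 0 ≤ w σ) {a x : ℝ} (ha : 0 ≤ a) :
    (∫⁻ σ in Ioc a x, ENNReal.ofReal (w σ)) * ENNReal.ofReal (G x) ≤
      ∫⁻ σ in Ioi 0, ENNReal.ofReal (w σ * G σ) := by
  have hsub : Ioc a x ⊆ Ioi 0 := fun σ hσ => ha.trans_lt hσ.1
  rw [← lintegral_mul_const' _ _ ENNReal.ofReal_ne_top]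
  calc ∫⁻ σ in Ioc a x, ENNReal.ofReal (w σ) * ENNReal.ofReal (G x)
      ≤ ∫⁻ σ in Ioc a x, ENNReal.ofReal (w σ * G σ) := by
        refine setLIntegral_mono' measurableSet_Ioc fun σ hσ => ?_
        rw [← ENNReal.ofReal_mul (hw σ (hsub hσ))]
        gcongr
        · exact hw σ (hsub hσ)
        · exact hG (hsub hσ) (hsub hσ |>.trans_le hσ.2) hσ.2
    _ ≤ ∫⁻ σ in Ioi 0, ENNReal.ofReal (w σ * G σ) := lintegral_mono_set hsub

lemma setLIntegral_Ioc_rpow_mul_add_rpow_ne_top {γ ω : ℝ} (δ : ℝ) (hγ : -1 < γ)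
    (hω : 0 < ω) :
    ∫⁻ t in Ioc 0 ω, ENNReal.ofReal (t ^ γ * (ω + t) ^ δ) ≠ ∞ := by
  have hsing : IntegrableOn (fun t : ℝ => t ^ γ) (Icc 0 ω) :=
    (intervalIntegrable_iff_integrableOn_Icc_of_le hω.le).1
      (intervalIntegral.intervalIntegrable_rpow' hγ)
  have hbdd : ContinuousOn (fun t : ℝ => (ω + t) ^ δ) (Icc 0 ω) :=
    (continuousOn_const.add continuousOn_id).rpow_const fun t ht =>
      Or.inl (show (0:ℝ) < ω + t by linarith [ht.1]).ne'
  exact ((hsing.mul_continuousOn hbdd isCompact_Icc).mono_set Ioc_subset_Icc_self)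
    |>.lintegral_lt_top.ne

lemma setLIntegral_Ioc_rpow_ne_top {a : ℝ} (b γ : ℝ) (ha : 0 < a) :
    ∫⁻ σ in Ioc a b, ENNReal.ofReal (σ ^ γ) ≠ ∞ := by
  have hcont : ContinuousOn (fun σ : ℝ => σ ^ γ) (Icc a b) :=
    continuousOn_id.rpow_const fun σ hσ => Or.inl (ha.trans_le hσ.1).ne'
  exact (hcont.integrableOn_Icc.mono_set Ioc_subset_Icc_self).lintegral_lt_top.ne

lemma setLIntegral_Ioc_rpow_ne_zero {a b : ℝ} (γ : ℝ) (ha : 0 ≤ a) (hab : a < b) :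
    ∫⁻ σ in Ioc a b, ENNReal.ofReal (σ ^ γ) ≠ 0 := by
  refine (setLIntegral_pos_iff (by fun_prop) |>.2 ?_).ne'
  rw [inter_eq_right.2 fun σ hσ => ?_, Real.volume_Ioc]
  · exact ENNReal.ofReal_pos.2 (sub_pos.2 hab)
  · exact (ENNReal.ofReal_pos.2 (rpow_pos_of_pos (ha.trans_lt hσ.1) _)).ne'

lemma setLIntegral_Ioc_mul_comp_add_le_of_antitoneOn {v G : ℝ → ℝ} {ω : ℝ}
    (hG : AntitoneOn G (Ioi 0)) (hv : ∀ t ∈ Ioc 0 ω, 0 ≤ v t) (hω : 0 < ω) :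
    ∫⁻ t in Ioc 0 ω, ENNReal.ofReal (v t * G (ω + t)) ≤
      (∫⁻ t in Ioc 0 ω, ENNReal.ofReal (v t)) * ENNReal.ofReal (G ω) := by
  rw [← lintegral_mul_const' _ _ ENNReal.ofReal_ne_top]
  refine setLIntegral_mono' measurableSet_Ioc fun t ht => ?_
  rw [← ENNReal.ofReal_mul (hv t ht)]
  gcongr
  · exact hv t ht
  · exact hG hω (show 0 < ω + t by linarith [ht.1]) (by linarith [ht.1])

lemma setLIntegral_Ioi_rpow_mul_add_rpow_mul_comp_add_le {G : ℝ → ℝ} {ω : ℝ} (γ δ : ℝ)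
    (hG : ∀ x, 0 < x → 0 ≤ G x) (hω : 0 < ω) :
    ∫⁻ t in Ioi ω, ENNReal.ofReal (t ^ γ * (ω + t) ^ δ * G (ω + t)) ≤
      ENNReal.ofReal (2 ^ |γ|) * ∫⁻ σ in Ioi 0, ENNReal.ofReal (σ ^ (γ + δ) * G σ) :=
  calc _ ≤ ∫⁻ t in Ioi ω, ENNReal.ofReal (2 ^ |γ|) *
        ENNReal.ofReal ((ω + t) ^ (γ + δ) * G (ω + t)) := by
        refine setLIntegral_mono' measurableSet_Ioi fun t (ht : ω < t) => ?_
        have hωt : 0 < ω + t := by linarith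
        rw [← ENNReal.ofReal_mul (by positivity), rpow_add hωt]
        refine ENNReal.ofReal_le_ofReal ?_
        calc t ^ γ * (ω + t) ^ δ * G (ω + t)
            ≤ 2 ^ |γ| * (ω + t) ^ γ * (ω + t) ^ δ * G (ω + t) := by
              gcongr
              · exact hG _ hωt
              · exact rpow_le_two_rpow_abs_mul_rpow _ (hω.trans ht) (by linarith) (by linarith)
          _ = 2 ^ |γ| * ((ω + t) ^ γ * (ω + t) ^ δ * G (ω + t)) := by ring
    _ ≤ ∫⁻ t in Ioi 0, ENNReal.ofReal (2 ^ |γ|) *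
        ENNReal.ofReal ((ω + t) ^ (γ + δ) * G (ω + t)) :=
        lintegral_mono_set (Ioi_subset_Ioi hω.le)
    _ = ENNReal.ofReal (2 ^ |γ|) *
        ∫⁻ σ in Ioi ω, ENNReal.ofReal (σ ^ (γ + δ) * G σ) := by
        rw [lintegral_const_mul' _ _ ENNReal.ofReal_ne_top,
          setLIntegral_Ioi_comp_add_left (fun σ => ENNReal.ofReal (σ ^ (γ + δ) * G σ))]
    _ ≤ _ := by gcongr

theorem exists_setLIntegral_le_mul_weighted_setLIntegral {s : ℝ} (A : ℝ) (hs : s < 2) {ω : ℝ}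
    (hω : 0 < ω) :
    ∃ K : ℝ≥0∞, K ≠ ∞ ∧ ∀ G : ℝ → ℝ, (∀ x, 0 < x → 0 ≤ G x) → AntitoneOn G (Ioi 0) →
      ∫⁻ t in Ioi 0, ENNReal.ofReal (t ^ (-s/2) * (ω + t) ^ (A - 1) * G (ω + t)) ≤
        K * ∫⁻ σ in Ioi 0, ENNReal.ofReal (σ ^ (-s/2 + A - 1) * G σ) := by
  set P := ∫⁻ t in Ioc 0 ω, ENNReal.ofReal (t ^ (-s/2) * (ω + t) ^ (A - 1))
  set m := ∫⁻ σ in Ioc (ω/2) ω, ENNReal.ofReal (σ ^ (-s/2 + A - 1))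
  have hP : P ≠ ∞ := setLIntegral_Ioc_rpow_mul_add_rpow_ne_top _ (by linarith) hω
  have hm_top : m ≠ ∞ := setLIntegral_Ioc_rpow_ne_top _ _ (half_pos hω)
  have hm_zero : m ≠ 0 := setLIntegral_Ioc_rpow_ne_zero _ (half_pos hω).le (half_lt_self hω)
  refine ⟨P / m + ENNReal.ofReal (2 ^ |-s/2|),
    ENNReal.add_ne_top.2 ⟨(ENNReal.div_lt_top hP hm_zero).ne, ENNReal.ofReal_ne_top⟩,
    fun G hG_nonneg hG => ?_⟩
  set J := ∫⁻ σ in Ioi 0, ENNReal.ofReal (σ ^ (-s/2 + A - 1) * G σ)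
  have hGω : ENNReal.ofReal (G ω) ≤ J / m := by
    rw [ENNReal.le_div_iff_mul_le (Or.inl hm_zero) (Or.inl hm_top), mul_comm]
    exact setLIntegral_Ioc_mul_le_setLIntegral_mul_of_antitoneOn hG
      (fun σ hσ => rpow_nonneg hσ.le _) (half_pos hω).le
  have h_near := setLIntegral_Ioc_mul_comp_add_le_of_antitoneOn hG
    (v := fun t => t ^ (-s/2) * (ω + t) ^ (A - 1)) (fun t ht => by have := ht.1; positivity) hω
  have h_far := setLIntegral_Ioi_rpow_mul_add_rpow_mul_comp_add_le (-s/2) (A - 1) hG_nonneg hω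
  rw [← add_sub_assoc] at h_far
  calc _ = (∫⁻ t in Ioc 0 ω, ENNReal.ofReal (t ^ (-s/2) * (ω + t) ^ (A - 1) * G (ω + t))) +
        ∫⁻ t in Ioi ω, ENNReal.ofReal (t ^ (-s/2) * (ω + t) ^ (A - 1) * G (ω + t)) := by
        rw [← Ioc_union_Ioi_eq_Ioi hω.le,
          lintegral_union measurableSet_Ioi (Ioc_disjoint_Ioi le_rfl)]
    _ ≤ P * (J / m) + ENNReal.ofReal (2 ^ |-s/2|) * J :=
        add_le_add (h_near.trans (by gcongr)) h_far
    _ = _ := by simp only [div_eq_mul_inv]; ring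

theorem integral_estimate_decreasing_general
    (s A : ℝ) (hs : s < 2) (f : ℝ → ℝ)
    (hf_nonneg : ∀ x : ℝ, 0 < x → 0 ≤ f x)
    (hf_decr : ∀ x y : ℝ, 0 < x → x ≤ y → f y ≤ f x)
    (hI : ∫⁻ σ in Set.Ioi (0:ℝ),
        ENNReal.ofReal (σ ^ (-s/2 + A - 1) * f (Real.sqrt σ)) < ⊤) :
    ∀ ω : ℝ, 0 < ω → ∃ C : ℝ, 0 < C ∧ ∀ r : ℝ, 0 < r →
      (∫⁻ t in Set.Ioi (0:ℝ),
          ENNReal.ofReal (t ^ (-s/2) * (ω + t) ^ (A - 1) * f (Real.sqrt (ω + t) * r)))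
        ≤ ENNReal.ofReal (C * r ^ (s - 2*A)) := by
  intro ω hω
  obtain ⟨K, hK, hbound⟩ := exists_setLIntegral_le_mul_weighted_setLIntegral A hs hω
  set I := ∫⁻ σ in Ioi (0:ℝ), ENNReal.ofReal (σ ^ (-s/2 + A - 1) * f (√σ))
  have hKI : K * I ≠ ∞ := ENNReal.mul_ne_top hK hI.ne
  refine ⟨(K * I).toReal + 1, by positivity, fun r hr => ?_⟩
  have hscale : ∫⁻ σ in Ioi 0, ENNReal.ofReal (σ ^ (-s/2 + A - 1) * f (√σ * r)) =
      ENNReal.ofReal (r ^ (s - 2*A)) * I := by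
    have hr2 : (r ^ 2) ^ (-(-s/2 + A)) = r ^ (s - 2*A) := by
      rw [← rpow_natCast, ← rpow_mul hr.le]
      ring_nf
    rw [← hr2, ← setLIntegral_rpow_mul_comp_mul_left (fun σ => f √σ) _ (pow_pos hr 2)]
    refine setLIntegral_congr_fun measurableSet_Ioi fun σ _ => ?_
    rw [sqrt_mul (sq_nonneg r), sqrt_sq hr.le, mul_comm r]
  calc _ ≤ K * ∫⁻ σ in Ioi 0, ENNReal.ofReal (σ ^ (-s/2 + A - 1) * f (√σ * r)) :=
        hbound (fun σ => f (√σ * r)) (fun x hx => hf_nonneg _ (by positivity))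
          fun x hx y _ hxy => hf_decr _ _ (by have := hx.out; positivity)
            (mul_le_mul_of_nonneg_right (sqrt_le_sqrt hxy) hr.le)
    _ = ENNReal.ofReal (r ^ (s - 2*A)) * (K * I) := by rw [hscale]; ring
    _ ≤ ENNReal.ofReal (r ^ (s - 2*A)) * ENNReal.ofReal ((K * I).toReal + 1) := by
        gcongr
        exact (ENNReal.le_ofReal_iff_toReal_le hKI (by positivity)).2
          (le_add_of_nonneg_right zero_le_one)
    _ = ENNReal.ofReal (((K * I).toReal + 1) * r ^ (s - 2*A)) := by
        rw [← ENNReal.ofReal_mul (by positivity), mul_comm]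

/-- Let `s < 2` and `A ∈ ℝ`, and let `f : (0,∞) → [0,∞)` be a measurable
decreasing function with `∫_0^∞ σ^(-s/2+A-1) f(√σ) dσ < ∞`. Then for every `ω > 0` there is a
constant `C > 0` such that for every `r > 0`,
`∫_0^∞ t^(-s/2) (ω+t)^(A-1) f(√(ω+t) r) dt ≤ C r^(s-2A)`. -/
theorem integral_estimate_decreasing
    (s A : ℝ) (hs : s < 2) (f : ℝ → ℝ)
    (hf_meas : Measurable f)
    (hf_nonneg : ∀ x : ℝ, 0 < x → 0 ≤ f x)
    (hf_decr : ∀ x y : ℝ, 0 < x → x ≤ y → f y ≤ f x)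
    (hI : ∫⁻ σ in Set.Ioi (0:ℝ),
        ENNReal.ofReal (σ ^ (-s/2 + A - 1) * f (Real.sqrt σ)) < ⊤) :
    ∀ ω : ℝ, 0 < ω → ∃ C : ℝ, 0 < C ∧ ∀ r : ℝ, 0 < r →
      (∫⁻ t in Set.Ioi (0:ℝ),
          ENNReal.ofReal (t ^ (-s/2) * (ω + t) ^ (A - 1) * f (Real.sqrt (ω + t) * r)))
        ≤ ENNReal.ofReal (C * r ^ (s - 2*A)) :=
  integral_estimate_decreasing_general s A hs f hf_nonneg hf_decr hI
end

section
/- Let $d\ge1$ and $p\in[1,\infty)$. The set $S_0(\mathbb{R}^d)$ of Schwartz functions $f$ on $\mathbb{R}^d$ such that $\partial^\beta f(0)=0$ for every multi-index $\beta\in\mathbb{N}^d$ is dense in $L^p(\mathbb{R}^d)$. -/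
open MeasureTheory Real Filter Set
open scoped ENNReal Topology

/-!
Approximate `g` in `Lᵖ` by a smooth compactly supported `h`, then multiply `h` by `1 - ρ` for a
bump function `ρ` that equals `1` near the origin and is supported in a small ball. The result
vanishes near `0`, so all its derivatives vanish there, and the error `ρ • h` is bounded by
`sup ‖h‖` on that ball, whose measure tends to `0` because Lebesgue measure has no atoms once
`d ≥ 1`.
-/

open Metric Function
open scoped ContDiff

theorem tendsto_measure_ball_nhdsGT_zero {α : Type*} [MetricSpace α] [ProperSpace α]
    [MeasurableSpace α] [OpensMeasurableSpace α] {μ : Measure α} [IsFiniteMeasureOnCompacts μ]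
    [NullSingletonClass μ] (a : α) :
    Tendsto (fun r => μ (ball a r)) (𝓝[>] 0) (𝓝 0) := by
  simpa using tendsto_measure_thickening_of_isClosed (μ := μ)
    ⟨1, one_pos, by simpa using measure_ball_lt_top.ne⟩ (isClosed_singleton (x := a))

theorem eLpNorm_le_measure_rpow_mul_of_support_subset {α F : Type*} [MeasurableSpace α]
    [NormedAddCommGroup F] {μ : Measure α} {p : ℝ≥0∞} {f : α → F} {s : Set α} {C : ℝ}
    (hfs : support f ⊆ s) (hfC : ∀ x, ‖f x‖ ≤ C) :
    eLpNorm f p μ ≤ μ s ^ p.toReal⁻¹ * ENNReal.ofReal C := by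
  rw [← eLpNorm_restrict_eq_of_support_subset hfs]
  simpa using eLpNorm_le_of_ae_bound (μ := μ.restrict s) (p := p) (ae_of_all _ hfC)

theorem iteratedFDeriv_eq_zero_of_eventuallyEq_zero {𝕜 E F : Type*}
    [NontriviallyNormedField 𝕜] [NormedAddCommGroup E] [NormedSpace 𝕜 E]
    [NormedAddCommGroup F] [NormedSpace 𝕜 F]
    {f : E → F} {a : E} (hf : f =ᶠ[𝓝 a] 0) (n : ℕ) : iteratedFDeriv 𝕜 n f a = 0 := by
  rw [(hf.iteratedFDeriv 𝕜 n).eq_of_nhds]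
  simp

section Cutoff

variable {E F : Type*} [NormedAddCommGroup E] [NormedSpace ℝ E] [MeasurableSpace E]
  [NormedAddCommGroup F] [NormedSpace ℝ F] {μ : Measure E} {p : ℝ≥0∞}

theorem ContDiffBump.eLpNorm_smul_le [HasContDiffBump E] {a : E} (ρ : ContDiffBump a)
    {h : E → F} {C : ℝ} (hC : ∀ x, ‖h x‖ ≤ C) :
    eLpNorm (fun x => ρ x • h x) p μ ≤ μ (ball a ρ.rOut) ^ p.toReal⁻¹ * ENNReal.ofReal C := by
  refine eLpNorm_le_measure_rpow_mul_of_support_subset ?_ fun x => ?_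
  · exact (support_smul_subset_left _ _).trans ρ.support_eq.subset
  · rw [norm_smul, Real.norm_of_nonneg ρ.nonneg]
    exact (mul_le_of_le_one_left (norm_nonneg _) ρ.le_one).trans (hC x)

theorem exists_contDiff_eventuallyEq_zero_eLpNorm_sub_lt [FiniteDimensional ℝ E] [BorelSpace E]
    [IsFiniteMeasureOnCompacts μ] [NullSingletonClass μ]
    (hp₀ : p ≠ 0) (hp : p ≠ ⊤) (a : E) {h : E → F} (hcs : HasCompactSupport h)
    (hh : ContDiff ℝ ∞ h) {ε : ℝ≥0∞} (hε : 0 < ε) :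
    ∃ f : E → F, HasCompactSupport f ∧ ContDiff ℝ ∞ f ∧ f =ᶠ[𝓝 a] 0 ∧
      eLpNorm (h - f) p μ < ε := by
  obtain ⟨C, hC⟩ := hcs.exists_bound_of_continuous hh.continuous
  have hpos : 0 < p.toReal⁻¹ := inv_pos.2 (ENNReal.toReal_pos hp₀ hp)
  have hsmall :
      Tendsto (fun r => μ (ball a r) ^ p.toReal⁻¹ * ENNReal.ofReal C) (𝓝[>] 0) (𝓝 0) :=
    ((ENNReal.tendsto_const_mul_rpow_nhds_zero_of_pos ENNReal.ofReal_ne_top hpos).comp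
      (tendsto_measure_ball_nhdsGT_zero a)).congr fun _ => mul_comm _ _
  obtain ⟨r, hr, hr₀⟩ := ((hsmall.eventually_lt_const hε).and self_mem_nhdsWithin).exists
  let ρ : ContDiffBump a := ⟨r / 2, r, half_pos hr₀, half_lt_self hr₀⟩
  refine ⟨fun x => (1 - ρ x) • h x, hcs.smul_left, (contDiff_const.sub ρ.contDiff).smul hh,
    ?_, ?_⟩
  · filter_upwards [closedBall_mem_nhds a (half_pos hr₀)] with x hx
    simp [ρ.one_of_mem_closedBall hx]
  · have hdiff : h - (fun x => (1 - ρ x) • h x) = fun x => ρ x • h x := by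
      ext x; simp [sub_smul]
    rw [hdiff]
    exact (ρ.eLpNorm_smul_le hC).trans_lt hr

end Cutoff

/-- Let `d ≥ 1` and `p ∈ [1,∞)`. The set `S₀(ℝ^d)` of Schwartz functions all
of whose derivatives vanish at the origin (equivalently, `∂^β f(0) = 0` for every multi-index
`β`) is dense in `L^p(ℝ^d)`: every `g ∈ L^p` can be approximated in the `L^p` norm, to within
any `ε > 0`, by such a Schwartz function. -/
theorem schwartz_vanishing_at_zero_dense_Lp (d : ℕ) (hd : 1 ≤ d) (p : ℝ) (hp : 1 ≤ p)
    (g : EuclideanSpace ℝ (Fin d) → ℂ) (hg : MemLp g (ENNReal.ofReal p) volume)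
    (ε : ℝ) (hε : 0 < ε) :
    ∃ f : SchwartzMap (EuclideanSpace ℝ (Fin d)) ℂ,
      (∀ n : ℕ, iteratedFDeriv ℝ n (⇑f) 0 = 0) ∧
      eLpNorm (g - ⇑f) (ENNReal.ofReal p) volume < ENNReal.ofReal ε := by
  have : Nonempty (Fin d) := ⟨⟨0, hd⟩⟩
  have hq : 1 ≤ ENNReal.ofReal p := by simpa using ENNReal.ofReal_le_ofReal hp
  set q := ENNReal.ofReal p
  obtain ⟨h, hcs, hh, hgh⟩ := hg.exist_eLpNorm_sub_le ENNReal.ofReal_ne_top hq (half_pos hε)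
  obtain ⟨f, hfcs, hf, hf₀, hhf⟩ := exists_contDiff_eventuallyEq_zero_eLpNorm_sub_lt (μ := volume)
    (zero_lt_one.trans_le hq).ne' ENNReal.ofReal_ne_top 0 hcs hh
    (ENNReal.ofReal_pos.2 (half_pos hε))
  refine ⟨hfcs.toSchwartzMap hf, iteratedFDeriv_eq_zero_of_eventuallyEq_zero hf₀, ?_⟩
  calc eLpNorm (g - f) q volume ≤ eLpNorm (g - h) q volume + eLpNorm (h - f) q volume := by
        simpa using eLpNorm_add_le (hg.aestronglyMeasurable.sub hh.continuous.aestronglyMeasurable)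
          (hh.continuous.aestronglyMeasurable.sub hf.continuous.aestronglyMeasurable) hq
    _ < ENNReal.ofReal (ε / 2) + ENNReal.ofReal (ε / 2) := ENNReal.add_lt_add_of_le_of_lt
        (hgh.trans_lt ENNReal.ofReal_lt_top).ne hgh hhf
    _ = ENNReal.ofReal ε := by
        rw [← ENNReal.ofReal_add (by positivity) (by positivity), add_halves]
end

section
/- Let $p\in(3/2,3)$, let $s$ satisfy $\frac{3}{p}-1<s<2$, let $\alpha\in\mathbb{R}$ and let $\omega>0$ be such that $\alpha+\frac{\sqrt{\omega}}{4\pi}>0$. Then there exists a constant $C>0$ (depending on $p,s,\alpha,\omega$) such that for every $f\in L^p(\mathbb{R}^3)$ one has $\int_0^\infty t^{-s/2}\,\frac{\left|\int_{\mathbb{R}^3} f(x)\,\mathbb{G}_{\omega+t}(x)\,dx\right|}{\alpha+\frac{\sqrt{\omega+t}}{4\pi}}\,dt \le C\,\|f\|_{L^p(\mathbb{R}^3)}$. (This is the boundedness of the singular coefficient functional $C_s(f)$ on $L^p$.) -/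
open MeasureTheory Real Filter Set
open scoped ENNReal Topology

/-- The Green function of the Helmholtz operator `ω - Δ` on `ℝ³`:
`𝔾_ω(x) = e^{-√ω |x|} / (4π |x|)`. -/
noncomputable def greenFn3 (ω : ℝ) (x : EuclideanSpace ℝ (Fin 3)) : ℝ :=
  Real.exp (-(Real.sqrt ω) * ‖x‖) / (4 * Real.pi * ‖x‖)

/-!
Hölder's inequality with the conjugate exponent `q = p / (p - 1) < 3` gives
`|∫ f 𝔾_μ| ≤ ‖f‖_p ‖𝔾_μ‖_q`, and in polar coordinates `‖𝔾_μ‖_q^q` is a Gamma integral,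
so `‖𝔾_μ‖_q = K μ^{(q-3)/(2q)}`. Since `α + √μ/(4π) ≥ c √μ` for `μ ≥ ω`, the integrand is at most
`K ‖f‖_p / c · t^{-s/2} (ω+t)^{-3/(2q)}`, which is integrable on `(0, ∞)`: at `0` because `s < 2`,
at `∞` because `s/2 + 3/(2q) > 1`, which is `s > 3/p - 1`.
-/

local notation "E3" => EuclideanSpace ℝ (Fin 3)

lemma exists_pos_mul_le_add_mul {a b x₀ : ℝ} (hb : 0 < b) (hx₀ : 0 < x₀) (h : 0 < a + b * x₀) :
    ∃ c > 0, ∀ x, x₀ ≤ x → c * x ≤ a + b * x := by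
  refine ⟨min b ((a + b * x₀) / x₀), lt_min hb (div_pos h hx₀), fun x hx => ?_⟩
  rcases le_or_gt 0 a with ha | ha
  · nlinarith [min_le_left b ((a + b * x₀) / x₀)]
  · calc min b ((a + b * x₀) / x₀) * x ≤ (a + b * x₀) / x₀ * x :=
          mul_le_mul_of_nonneg_right (min_le_right _ _) (by linarith)
      _ ≤ a + b * x := by
          rw [div_mul_eq_mul_div, div_le_iff₀ hx₀]
          nlinarith

lemma integrableOn_rpow_mul_add_rpow {ω a b : ℝ} (hω : 0 < ω) (ha : -1 < a) (hab : a + b < -1) :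
    IntegrableOn (fun t : ℝ => t ^ a * (ω + t) ^ b) (Ioi 0) := by
  have hb : b ≤ 0 := by linarith
  have hmeas : AEStronglyMeasurable (fun t : ℝ => t ^ a * (ω + t) ^ b) :=
    (by fun_prop : Measurable fun t : ℝ => t ^ a * (ω + t) ^ b).aestronglyMeasurable
  rw [← Ioc_union_Ioi_eq_Ioi zero_le_one]
  refine IntegrableOn.union ?_ ?_
  · have hbase : IntegrableOn (fun t : ℝ => ω ^ b * t ^ a) (Ioc 0 1) :=
      ((intervalIntegrable_iff_integrableOn_Ioc_of_le zero_le_one).mp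
        (intervalIntegral.intervalIntegrable_rpow' ha)).const_mul _
    refine hbase.mono' hmeas.restrict
      ((ae_restrict_mem measurableSet_Ioc).mono fun t ⟨(ht0 : 0 < t), _⟩ => ?_)
    rw [norm_of_nonneg (by positivity), mul_comm]
    exact mul_le_mul_of_nonneg_right (rpow_le_rpow_of_nonpos hω (by linarith) hb) (by positivity)
  · refine (integrableOn_Ioi_rpow_of_lt hab zero_lt_one).mono' hmeas.restrict
      ((ae_restrict_mem measurableSet_Ioi).mono fun t (ht : 1 < t) => ?_)
    have ht0 : 0 < t := by linarith
    rw [norm_of_nonneg (by positivity), rpow_add ht0]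
    exact mul_le_mul_of_nonneg_left (rpow_le_rpow_of_nonpos ht0 (by linarith) hb) (by positivity)

lemma setIntegral_rpow_mul_add_rpow_pos {ω a b : ℝ} (hω : 0 < ω) (ha : -1 < a)
    (hab : a + b < -1) :
    0 < ∫ t in Ioi 0, t ^ a * (ω + t) ^ b := by
  rw [setIntegral_pos_iff_support_of_nonneg_ae _ (integrableOn_rpow_mul_add_rpow hω ha hab)]
  · have : Function.support (fun t : ℝ => t ^ a * (ω + t) ^ b) ∩ Ioi 0 = Ioi 0 :=
      inter_eq_right.mpr fun t (ht : 0 < t) => (by positivity : 0 < t ^ a * (ω + t) ^ b).ne'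
    rw [this, Real.volume_Ioi]
    exact ENNReal.zero_lt_top
  · exact (ae_restrict_mem measurableSet_Ioi).mono fun t (ht : 0 < t) => by positivity

lemma setLIntegral_ofReal_le_mul_setIntegral {α : Type*} [MeasurableSpace α] {μ : Measure α}
    {s : Set α} {F h : α → ℝ} {M : ℝ} (hs : MeasurableSet s) (hM : 0 ≤ M)
    (hh : IntegrableOn h s μ) (hh₀ : ∀ x ∈ s, 0 ≤ h x) (hF : ∀ x ∈ s, F x ≤ M * h x) :
    ∫⁻ x in s, ENNReal.ofReal (F x) ∂μ ≤ ENNReal.ofReal (M * ∫ x in s, h x ∂μ) :=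
  calc ∫⁻ x in s, ENNReal.ofReal (F x) ∂μ
      ≤ ∫⁻ x in s, ENNReal.ofReal (M * h x) ∂μ :=
        setLIntegral_mono' hs fun x hx => ENNReal.ofReal_le_ofReal (hF x hx)
    _ = ENNReal.ofReal (M * ∫ x in s, h x ∂μ) := by
        rw [← integral_const_mul, ofReal_integral_eq_lintegral_ofReal (hh.const_mul M)
          ((ae_restrict_mem hs).mono fun x hx => mul_nonneg hM (hh₀ x hx))]

lemma abs_integral_mul_le_eLpNorm_mul_eLpNorm {α : Type*} [MeasurableSpace α] {μ : Measure α}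
    {p q : ℝ} (hpq : p.HolderConjugate q) {f g : α → ℝ}
    (hf : MemLp f (ENNReal.ofReal p) μ) (hg : MemLp g (ENNReal.ofReal q) μ) :
    |∫ x, f x * g x ∂μ| ≤
      (eLpNorm f (ENNReal.ofReal p) μ).toReal * (eLpNorm g (ENNReal.ofReal q) μ).toReal := by
  have := hpq.ennrealOfReal
  have h : ‖∫ x, f x * g x ∂μ‖ₑ ≤ eLpNorm f (ENNReal.ofReal p) μ * eLpNorm g (ENNReal.ofReal q) μ :=
    calc ‖∫ x, f x * g x ∂μ‖ₑ ≤ eLpNorm (f • g) 1 μ :=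
          (enorm_integral_le_lintegral_enorm _).trans_eq eLpNorm_one_eq_lintegral_enorm.symm
      _ ≤ _ := eLpNorm_smul_le_mul_eLpNorm hg.1 hf.1
  rw [← ENNReal.toReal_mul, ← Real.norm_eq_abs, ← toReal_enorm]
  exact ENNReal.toReal_mono (ENNReal.mul_ne_top hf.eLpNorm_ne_top hg.eLpNorm_ne_top) h

lemma measurable_greenFn3 (μ : ℝ) : Measurable (greenFn3 μ) := by
  unfold greenFn3; fun_prop

lemma greenFn3_radial_integrand_eq {q μ y : ℝ} (hy : 0 < y) :
    y ^ (3 - 1) • ‖Real.exp (-(Real.sqrt μ) * y) / (4 * π * y)‖ ^ q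
      = ((4 * π) ^ q)⁻¹ * (y ^ ((3 - q) - 1) * Real.exp (-(q * Real.sqrt μ * y))) := by
  rw [smul_eq_mul, norm_of_nonneg (by positivity), div_rpow (by positivity) (by positivity),
    ← exp_mul, mul_rpow (by positivity) hy.le, show (3 : ℝ) - q - 1 = 2 - q by ring,
    rpow_sub hy, rpow_two, show (3 - 1 : ℕ) = 2 from rfl]
  field_simp

/-- `3 |B₁| = 4π` is the area of the unit sphere and `q^{q-3} Γ(3-q) = ∫₀^∞ r^{2-q} e^{-qr} dr`. -/
noncomputable def greenLqConst (q : ℝ) : ℝ :=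
  3 * volume.real (Metric.ball (0 : E3) 1) * ((4 * π) ^ q)⁻¹ * q ^ (q - 3) * Gamma (3 - q)

lemma greenLqConst_pos {q : ℝ} (hq : 0 < q) (hq3 : q < 3) : 0 < greenLqConst q := by
  have := Gamma_pos_of_pos (sub_pos.mpr hq3)
  have : 0 < volume.real (Metric.ball (0 : E3) 1) :=
    ENNReal.toReal_pos (Metric.measure_ball_pos volume 0 one_pos).ne' measure_ball_lt_top.ne
  unfold greenLqConst
  positivity

lemma integrableOn_rpow_mul_exp_neg_mul {a r : ℝ} (ha : 0 < a) (hr : 0 < r) :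
    IntegrableOn (fun y : ℝ => y ^ (a - 1) * Real.exp (-(r * y))) (Ioi 0) := by
  simpa [rpow_one, neg_mul] using
    integrableOn_rpow_mul_exp_neg_mul_rpow (p := 1) (by linarith) one_pos hr

lemma integrable_norm_greenFn3_rpow {q μ : ℝ} (hq : 0 < q) (hq3 : q < 3) (hμ : 0 < μ) :
    Integrable (fun x : E3 => ‖greenFn3 μ x‖ ^ q) := by
  set φ : ℝ → ℝ := fun r => ‖Real.exp (-(Real.sqrt μ) * r) / (4 * π * r)‖ ^ q
  change Integrable fun x : E3 => φ ‖x‖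
  rw [integrable_fun_norm_addHaar, finrank_euclideanSpace_fin]
  exact IntegrableOn.congr_fun
    ((integrableOn_rpow_mul_exp_neg_mul (sub_pos.mpr hq3) (by positivity)).const_mul _)
    (fun y hy => (greenFn3_radial_integrand_eq hy).symm) measurableSet_Ioi

lemma integral_norm_greenFn3_rpow {q μ : ℝ} (hq : 0 < q) (hq3 : q < 3) (hμ : 0 < μ) :
    ∫ x : E3, ‖greenFn3 μ x‖ ^ q = greenLqConst q * μ ^ ((q - 3) / 2) := by
  have hr : 0 < q * Real.sqrt μ := by positivity
  have hscale : (1 / (q * Real.sqrt μ)) ^ (3 - q) = q ^ (q - 3) * μ ^ ((q - 3) / 2) := by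
    rw [one_div, inv_rpow hr.le, ← rpow_neg hr.le, mul_rpow hq.le (sqrt_nonneg _), sqrt_eq_rpow,
      ← rpow_mul hμ.le, neg_sub, show 1 / 2 * (q - 3) = (q - 3) / 2 by ring]
  set φ : ℝ → ℝ := fun r => ‖Real.exp (-(Real.sqrt μ) * r) / (4 * π * r)‖ ^ q
  change ∫ x : E3, φ ‖x‖ = _
  rw [integral_fun_norm_addHaar, finrank_euclideanSpace_fin,
    setIntegral_congr_fun measurableSet_Ioi fun y hy => greenFn3_radial_integrand_eq hy,
    integral_const_mul, integral_rpow_mul_exp_neg_mul_Ioi (sub_pos.mpr hq3) hr, hscale]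
  simp only [greenLqConst, nsmul_eq_mul, smul_eq_mul, Nat.cast_ofNat]
  ring

lemma memLp_greenFn3 {q μ : ℝ} (hq : 0 < q) (hq3 : q < 3) (hμ : 0 < μ) :
    MemLp (greenFn3 μ) (ENNReal.ofReal q) := by
  rw [← integrable_norm_rpow_iff (measurable_greenFn3 μ).aestronglyMeasurable
    (by simpa using hq) ENNReal.ofReal_ne_top, ENNReal.toReal_ofReal hq.le]
  exact integrable_norm_greenFn3_rpow hq hq3 hμ

lemma eLpNorm_greenFn3 {q μ : ℝ} (hq : 0 < q) (hq3 : q < 3) (hμ : 0 < μ) :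
    (eLpNorm (greenFn3 μ) (ENNReal.ofReal q)).toReal
      = greenLqConst q ^ q⁻¹ * μ ^ ((q - 3) / (2 * q)) := by
  have hC := (greenLqConst_pos hq hq3).le
  rw [(memLp_greenFn3 hq hq3 hμ).eLpNorm_eq_integral_rpow_norm (by simpa using hq)
    ENNReal.ofReal_ne_top, ENNReal.toReal_ofReal hq.le, integral_norm_greenFn3_rpow hq hq3 hμ,
    ENNReal.toReal_ofReal (by positivity), mul_rpow hC (by positivity), ← rpow_mul hμ.le]
  congr 2
  field_simp

lemma abs_integral_mul_greenFn3_le {p q μ : ℝ} (hpq : p.HolderConjugate q) (hq3 : q < 3)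
    (hμ : 0 < μ) {f : E3 → ℝ} (hf : MemLp f (ENNReal.ofReal p)) :
    |∫ x, f x * greenFn3 μ x|
      ≤ (eLpNorm f (ENNReal.ofReal p)).toReal *
          (greenLqConst q ^ q⁻¹ * μ ^ ((q - 3) / (2 * q))) := by
  rw [← eLpNorm_greenFn3 hpq.symm.pos hq3 hμ]
  exact abs_integral_mul_le_eLpNorm_mul_eLpNorm hpq hf (memLp_greenFn3 hpq.symm.pos hq3 hμ)

lemma mul_abs_integral_mul_greenFn3_div_le {p q μ c D τ : ℝ} (hpq : p.HolderConjugate q)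
    (hq3 : q < 3) (hμ : 0 < μ) (hc : 0 < c) (hD : c * Real.sqrt μ ≤ D) (hτ : 0 ≤ τ)
    {f : E3 → ℝ} (hf : MemLp f (ENNReal.ofReal p)) :
    τ * |∫ x, f x * greenFn3 μ x| / D
      ≤ (eLpNorm f (ENNReal.ofReal p)).toReal * greenLqConst q ^ q⁻¹ / c
          * (τ * μ ^ (-(3 / (2 * q)))) := by
  have hq := hpq.symm.pos
  have hK := (rpow_pos_of_pos (greenLqConst_pos hq hq3) q⁻¹).le
  have hnum := mul_le_mul_of_nonneg_left (abs_integral_mul_greenFn3_le hpq hq3 hμ hf) hτ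
  refine (div_le_div₀ (by positivity) hnum (mul_pos hc (sqrt_pos.mpr hμ)) hD).trans_eq ?_
  rw [show (q - 3) / (2 * q) = -(3 / (2 * q)) + 1 / 2 by field_simp; ring,
    rpow_add hμ, ← sqrt_eq_rpow]
  field_simp

theorem singular_coefficient_bounded_general (p s α ω : ℝ)
    (hp₁ : 3/2 < p) (hs₁ : 3/p - 1 < s) (hs₂ : s < 2)
    (hω : 0 < ω) (hα : 0 < α + Real.sqrt ω / (4 * Real.pi)) :
    ∃ C : ℝ, 0 < C ∧ ∀ f : EuclideanSpace ℝ (Fin 3) → ℝ,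
      MemLp f (ENNReal.ofReal p) volume →
      (∫⁻ t in Set.Ioi (0:ℝ),
          ENNReal.ofReal (t ^ (-s/2)
            * |∫ x : EuclideanSpace ℝ (Fin 3), f x * greenFn3 (ω + t) x|
            / (α + Real.sqrt (ω + t) / (4 * Real.pi))))
        ≤ ENNReal.ofReal (C * (eLpNorm f (ENNReal.ofReal p) volume).toReal) := by
  obtain ⟨q, hpq, hq3⟩ : ∃ q, p.HolderConjugate q ∧ q < 3 :=
    ⟨p / (p - 1), .conjExponent (by linarith), by rw [div_lt_iff₀ (by linarith)]; linarith⟩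
  obtain ⟨c, hc, hden⟩ := exists_pos_mul_le_add_mul (a := α) (b := (4 * π)⁻¹) (by positivity)
    (sqrt_pos.mpr hω) (by rwa [inv_mul_eq_div])
  have hexp : -s / 2 + -(3 / (2 * q)) < -1 := by
    have := hpq.inv_add_inv_eq_one
    rw [div_eq_mul_inv] at hs₁
    rw [show 3 / (2 * q) = 3 / 2 * q⁻¹ by ring]
    linarith
  have hK := rpow_pos_of_pos (greenLqConst_pos hpq.symm.pos hq3) q⁻¹
  have hJ := setIntegral_rpow_mul_add_rpow_pos hω (by linarith) hexp
  refine ⟨greenLqConst q ^ q⁻¹ / c * ∫ t in Ioi 0, t ^ (-s / 2) * (ω + t) ^ (-(3 / (2 * q))),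
    by positivity, fun f hf => ?_⟩
  refine (setLIntegral_ofReal_le_mul_setIntegral
    (M := (eLpNorm f (ENNReal.ofReal p)).toReal * greenLqConst q ^ q⁻¹ / c)
    measurableSet_Ioi (by positivity)
    (integrableOn_rpow_mul_add_rpow hω (by linarith) hexp) (fun t (ht : 0 < t) => by positivity)
    fun t (ht : 0 < t) => ?_).trans_eq (by congr 1; ring)
  have hD := hden _ (sqrt_le_sqrt (by linarith : ω ≤ ω + t))
  rw [inv_mul_eq_div] at hD
  exact mul_abs_integral_mul_greenFn3_div_le (τ := t ^ (-s / 2)) hpq hq3 (by linarith) hc hD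
    (by positivity) hf

/-- Let `p ∈ (3/2,3)`, `3/p - 1 < s < 2`, `α ∈ ℝ` and `ω > 0` with
`α + √ω/(4π) > 0`. Then there is `C > 0` such that for every `f ∈ L^p(ℝ³)`,
`∫_0^∞ t^{-s/2} |∫ f 𝔾_{ω+t}| / (α + √(ω+t)/(4π)) dt ≤ C ‖f‖_{L^p}`
(boundedness of the singular coefficient functional `C_s(f)` on `L^p`). -/
theorem singular_coefficient_bounded (p s α ω : ℝ)
    (hp₁ : 3/2 < p) (hp₂ : p < 3) (hs₁ : 3/p - 1 < s) (hs₂ : s < 2)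
    (hω : 0 < ω) (hα : 0 < α + Real.sqrt ω / (4 * Real.pi)) :
    ∃ C : ℝ, 0 < C ∧ ∀ f : EuclideanSpace ℝ (Fin 3) → ℝ,
      MemLp f (ENNReal.ofReal p) volume →
      (∫⁻ t in Set.Ioi (0:ℝ),
          ENNReal.ofReal (t ^ (-s/2)
            * |∫ x : EuclideanSpace ℝ (Fin 3), f x * greenFn3 (ω + t) x|
            / (α + Real.sqrt (ω + t) / (4 * Real.pi))))
        ≤ ENNReal.ofReal (C * (eLpNorm f (ENNReal.ofReal p) volume).toReal) :=
  singular_coefficient_bounded_general p s α ω hp₁ hs₁ hs₂ hω hα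
end
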